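/- In the setup of a shortest dicycle $1,\dots,q$ ($q \ge 2$) in the auxiliary digraph for $S, T \in \mathcal{F}_{k,r}$ with $Y = X_2 \cup \dots \cup X_q$: there exists an arc $f'_1 \in S$ with $\mathrm{head}(f'_1) = \mathrm{head}(f_1)$ such that either ($f'_1 \in S \setminus T$ and $f'_1$ is contained in $X_1$) or ($f'_1 \in S \cap T$ and $f'_1$ is contained in $X_1 \cap Y$). -/
import Mathlib


open Finset

variable {V A : Type*}

/-- Number of arcs of `F` entering the vertex set `X`. -/
def inDeg [DecidableEq V] (hd tl : A → V) (F : Finset A) (X : Finset V) : ℕ :=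
  (F.filter (fun a => hd a ∈ X ∧ tl a ∉ X)).card

/-- Number of arcs of `F` with head `v`. -/
def vDeg [DecidableEq V] (hd : A → V) (F : Finset A) (v : V) : ℕ :=
  (F.filter (fun a => hd a = v)).card

/-- The vertex set `X` contains the arc `a` (both endpoints in `X`). -/
def ArcIn (hd tl : A → V) (X : Finset V) (a : A) : Prop :=
  hd a ∈ X ∧ tl a ∈ X

/-- `F` contains a directed cycle. -/
def HasDicycle (hd tl : A → V) (F : Finset A) : Prop :=
  ∃ n : ℕ, 0 < n ∧ ∃ (v : Fin (n + 1) → V) (e : Fin n → A),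
    (∀ i : Fin n, e i ∈ F ∧ tl (e i) = v i.castSucc ∧ hd (e i) = v i.succ) ∧
    v 0 = v (Fin.last n)

/-- `F` is an `r`-arborescence: acyclic, every non-root vertex has exactly one
incoming arc, and `r` has none. -/
def IsArb [DecidableEq V] (hd tl : A → V) (r : V) (F : Finset A) : Prop :=
  ¬ HasDicycle hd tl F ∧ (∀ v : V, v ≠ r → inDeg hd tl F {v} = 1) ∧
    inDeg hd tl F {r} = 0

/-- `F` can be partitioned into `k` arc-disjoint `r`-arborescences. -/
def Feasible [DecidableEq V] [DecidableEq A] (hd tl : A → V) (k : ℕ) (r : V)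
    (F : Finset A) : Prop :=
  ∃ P : Fin k → Finset A, (∀ i j : Fin k, i ≠ j → Disjoint (P i) (P j)) ∧
    Finset.univ.biUnion P = F ∧ ∀ i : Fin k, IsArb hd tl r (P i)

/-- `F` can be partitioned into `k` arc-disjoint arborescences with arbitrary roots. -/
def FeasibleAny [DecidableEq V] [DecidableEq A] (hd tl : A → V) (k : ℕ)
    (F : Finset A) : Prop :=
  ∃ P : Fin k → Finset A, (∀ i j : Fin k, i ≠ j → Disjoint (P i) (P j)) ∧
    Finset.univ.biUnion P = F ∧ ∀ i : Fin k, ∃ r : V, IsArb hd tl r (P i)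

/-- `X` is a tight set with respect to `S`: it avoids the root and exactly `k`
arcs of `S` enter it. -/
def Tight [DecidableEq V] (hd tl : A → V) (S : Finset A) (k : ℕ) (r : V)
    (X : Finset V) : Prop :=
  r ∉ X ∧ inDeg hd tl S X = k

/-- `X` is the inclusionwise minimal tight set with respect to `S` containing the
arc `f`, or `X = V` if no tight set contains `f`. -/
def MinTightFor [Fintype V] [DecidableEq V] (hd tl : A → V) (S : Finset A)
    (k : ℕ) (r : V) (f : A) (X : Finset V) : Prop :=
  (Tight hd tl S k r X ∧ ArcIn hd tl X f ∧
    ∀ Y : Finset V, Tight hd tl S k r Y → ArcIn hd tl Y f → X ⊆ Y) ∨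
  ((¬ ∃ Y : Finset V, Tight hd tl S k r Y ∧ ArcIn hd tl Y f) ∧ X = Finset.univ)

/-- A directed cycle of length `m` in the auxiliary digraph `H` on `[p]`, whose
arcs are the pairs `(i, j)` such that `X i` contains `e j`. -/
def AuxCycle {p : ℕ} (hd tl : A → V) (X : Fin p → Finset V) (e : Fin p → A)
    (m : ℕ) : Prop :=
  ∃ c : Fin m → Fin p, Function.Injective c ∧
    ∀ i : Fin m, ArcIn hd tl (X (c i)) (e (c ⟨(i.val + 1) % m, Nat.mod_lt _ i.pos⟩))

/-- `seq` is a reconfiguration sequence of length `ℓ` from `S` to `T` within the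
family described by `Feas`. -/
def IsReconfig [DecidableEq A] (Feas : Finset A → Prop) (S T : Finset A) (ℓ : ℕ)
    (seq : Fin (ℓ + 1) → Finset A) : Prop :=
  seq 0 = S ∧ seq (Fin.last ℓ) = T ∧ (∀ i, Feas (seq i)) ∧
    ∀ i : Fin ℓ, (seq i.castSucc \ seq i.succ).card = 1 ∧
      (seq i.succ \ seq i.castSucc).card = 1

section Aux

variable [DecidableEq V] [DecidableEq A]

private lemma inDeg_eq_sum (hd tl : A → V) (F : Finset A) (X : Finset V) :
    inDeg hd tl F X = ∑ a ∈ F, if hd a ∈ X ∧ tl a ∉ X then 1 else 0 :=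
  Finset.card_filter _ _

private lemma pointwise_le (hd tl : A → V) (a : A) (U W : Finset V) :
    ((if hd a ∈ U ∪ W ∧ tl a ∉ U ∪ W then 1 else 0) +
      (if hd a ∈ U ∩ W ∧ tl a ∉ U ∩ W then 1 else 0) : ℕ) ≤
    (if hd a ∈ U ∧ tl a ∉ U then 1 else 0) +
      (if hd a ∈ W ∧ tl a ∉ W then 1 else 0) := by
  simp only [Finset.mem_union, Finset.mem_inter]
  split_ifs <;> first | omega | tauto

private lemma submod (hd tl : A → V) (F : Finset A) (U W : Finset V) :
    inDeg hd tl F (U ∪ W) + inDeg hd tl F (U ∩ W) ≤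
      inDeg hd tl F U + inDeg hd tl F W := by
  rw [inDeg_eq_sum, inDeg_eq_sum, inDeg_eq_sum, inDeg_eq_sum,
    ← Finset.sum_add_distrib, ← Finset.sum_add_distrib]
  exact Finset.sum_le_sum (fun a _ => pointwise_le hd tl a U W)

private lemma submod_strict (hd tl : A → V) (F : Finset A) (U W : Finset V)
    {a₀ : A} (ha : a₀ ∈ F) (h1 : hd a₀ ∈ U) (h2 : hd a₀ ∉ W)
    (h3 : tl a₀ ∈ W) (h4 : tl a₀ ∉ U) :
    inDeg hd tl F (U ∪ W) + inDeg hd tl F (U ∩ W) + 1 ≤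
      inDeg hd tl F U + inDeg hd tl F W := by
  have hlt : inDeg hd tl F (U ∪ W) + inDeg hd tl F (U ∩ W) <
      inDeg hd tl F U + inDeg hd tl F W := by
    rw [inDeg_eq_sum, inDeg_eq_sum, inDeg_eq_sum, inDeg_eq_sum,
      ← Finset.sum_add_distrib, ← Finset.sum_add_distrib]
    refine Finset.sum_lt_sum (fun a _ => pointwise_le hd tl a U W) ⟨a₀, ha, ?_⟩
    have e1 : (if hd a₀ ∈ U ∪ W ∧ tl a₀ ∉ U ∪ W then (1:ℕ) else 0) = 0 :=
      if_neg (by simp [Finset.mem_union, h3])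
    have e2 : (if hd a₀ ∈ U ∩ W ∧ tl a₀ ∉ U ∩ W then (1:ℕ) else 0) = 0 :=
      if_neg (by simp [Finset.mem_inter, h2])
    have e3 : (if hd a₀ ∈ U ∧ tl a₀ ∉ U then (1:ℕ) else 0) = 1 := if_pos ⟨h1, h4⟩
    rw [e1, e2, e3]
    omega
  omega

private lemma inDeg_partition (hd tl : A → V) {k : ℕ} (P : Fin k → Finset A)
    (hdis : ∀ i j : Fin k, i ≠ j → Disjoint (P i) (P j)) (X : Finset V) :
    inDeg hd tl (Finset.univ.biUnion P) X = ∑ i, inDeg hd tl (P i) X := by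
  unfold inDeg
  rw [Finset.filter_biUnion, Finset.card_biUnion]
  intro i _ j _ hij
  exact Finset.disjoint_filter_filter (hdis i j hij)

private lemma arb_lb [Fintype V] (hd tl : A → V) {r : V} {F : Finset A}
    (hF : IsArb hd tl r F) {X : Finset V} (hne : X.Nonempty) (hr : r ∉ X) :
    1 ≤ inDeg hd tl F X := by
  by_contra hcon
  have h0 : inDeg hd tl F X = 0 := by omega
  have hno : ∀ a ∈ F, hd a ∈ X → tl a ∈ X := by
    intro a ha hhd
    by_contra htl
    have hmem : a ∈ F.filter (fun a => hd a ∈ X ∧ tl a ∉ X) :=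
      Finset.mem_filter.2 ⟨ha, hhd, htl⟩
    unfold inDeg at h0
    rw [Finset.card_eq_zero] at h0
    rw [h0] at hmem
    exact absurd hmem (Finset.notMem_empty a)
  have hstep : ∀ x : {y // y ∈ X}, ∃ a, a ∈ F ∧ hd a = x.1 ∧ tl a ∈ X := by
    rintro ⟨x, hx⟩
    have hxr : x ≠ r := fun h => hr (h ▸ hx)
    have h1 : inDeg hd tl F {x} = 1 := hF.2.1 x hxr
    have hpos : 0 < (F.filter (fun a => hd a ∈ ({x} : Finset V) ∧
        tl a ∉ ({x} : Finset V))).card := by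
      unfold inDeg at h1
      omega
    obtain ⟨a, ha⟩ := Finset.card_pos.1 hpos
    obtain ⟨haF, h2, _⟩ := Finset.mem_filter.1 ha
    have h2' : hd a = x := Finset.mem_singleton.1 h2
    exact ⟨a, haF, h2', hno a haF (by rwa [h2'])⟩
  choose arc harcF harchd harctl using hstep
  obtain ⟨x₀, hx₀⟩ := hne
  let nxt : {y // y ∈ X} → {y // y ∈ X} := fun x => ⟨tl (arc x), harctl x⟩
  let g : ℕ → {y // y ∈ X} := fun n => nxt^[n] ⟨x₀, hx₀⟩
  have hg1 : ∀ m, g (m + 1) = nxt (g m) := fun m =>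
    Function.iterate_succ_apply' nxt m _
  have htl' : ∀ m, tl (arc (g m)) = (g (m + 1)).1 := by
    intro m; rw [hg1 m]
  have key : ∀ i j : ℕ, i < j → g i = g j → False := by
    intro i j hlt hgij
    apply hF.1
    refine ⟨j - i, by omega, fun t => (g (j - t.1)).1,
      fun t => arc (g (j - 1 - t.1)), ?_, ?_⟩
    · intro t
      have ht : t.1 < j - i := t.2
      refine ⟨harcF _, ?_, ?_⟩
      · show tl (arc (g (j - 1 - t.1))) = (g (j - (t.castSucc).1)).1
        rw [htl' (j - 1 - t.1)]
        have : j - 1 - t.1 + 1 = j - (t.castSucc).1 := by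
          simp only [Fin.coe_castSucc]
          omega
        rw [this]
      · show hd (arc (g (j - 1 - t.1))) = (g (j - (t.succ).1)).1
        rw [harchd (g (j - 1 - t.1))]
        have : j - 1 - t.1 = j - (t.succ).1 := by
          simp only [Fin.val_succ]
          omega
        rw [this]
    · show (g (j - (0 : Fin (j - i + 1)).1)).1 = (g (j - (Fin.last (j - i)).1)).1
      have e3 : j - (0 : Fin (j - i + 1)).1 = j := by simp
      have e4 : j - (Fin.last (j - i)).1 = i := by
        simp only [Fin.val_last]
        omega
      rw [e3, e4, hgij]
  obtain ⟨i, j, hij, hgij⟩ := Finite.exists_ne_map_eq_of_infinite g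
  rcases lt_trichotomy i j with h | h | h
  · exact key i j h hgij
  · exact hij h
  · exact key j i h hgij.symm

private lemma feas_deg [Fintype V] {hd tl : A → V} {k : ℕ} {r : V} {S : Finset A}
    (hS : Feasible hd tl k r S) {v : V} (hv : v ≠ r) : inDeg hd tl S {v} = k := by
  obtain ⟨P, hdis, hun, harb⟩ := hS
  rw [← hun, inDeg_partition hd tl P hdis]
  rw [Finset.sum_congr rfl (fun i _ => (harb i).2.1 v hv)]
  simp

private lemma feas_lb [Fintype V] {hd tl : A → V} {k : ℕ} {r : V} {S : Finset A}
    (hS : Feasible hd tl k r S) {X : Finset V} (hne : X.Nonempty) (hr : r ∉ X) :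
    k ≤ inDeg hd tl S X := by
  obtain ⟨P, hdis, hun, harb⟩ := hS
  rw [← hun, inDeg_partition hd tl P hdis]
  calc k = ∑ _i : Fin k, 1 := by simp
  _ ≤ _ := Finset.sum_le_sum fun i _ => arb_lb hd tl (harb i) hne hr

private lemma tight_iu [Fintype V] {hd tl : A → V} {k : ℕ} {r : V} {S : Finset A}
    (hS : Feasible hd tl k r S) {U W : Finset V}
    (hU : Tight hd tl S k r U) (hW : Tight hd tl S k r W)
    (hne : (U ∩ W).Nonempty) :
    Tight hd tl S k r (U ∩ W) ∧ Tight hd tl S k r (U ∪ W) := by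
  have hrI : r ∉ U ∩ W := fun h => hU.1 (Finset.mem_inter.1 h).1
  have hrU : r ∉ U ∪ W := fun h => (Finset.mem_union.1 h).elim hU.1 hW.1
  have h1 : k ≤ inDeg hd tl S (U ∩ W) := feas_lb hS hne hrI
  have h2 : k ≤ inDeg hd tl S (U ∪ W) :=
    feas_lb hS (hne.mono Finset.inter_subset_union) hrU
  have h3 := submod hd tl S U W
  have h4 := hU.2
  have h5 := hW.2
  exact ⟨⟨hrI, by omega⟩, ⟨hrU, by omega⟩⟩

private lemma no_cross [Fintype V] {hd tl : A → V} {k : ℕ} {r : V} {S : Finset A}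
    (hS : Feasible hd tl k r S) {U W : Finset V}
    (hU : Tight hd tl S k r U) (hW : Tight hd tl S k r W)
    (hne : (U ∩ W).Nonempty) {a₀ : A} (ha : a₀ ∈ S)
    (h1 : hd a₀ ∈ U) (h2 : hd a₀ ∉ W) (h3 : tl a₀ ∈ W) (h4 : tl a₀ ∉ U) :
    False := by
  have hrI : r ∉ U ∩ W := fun h => hU.1 (Finset.mem_inter.1 h).1
  have hrU : r ∉ U ∪ W := fun h => (Finset.mem_union.1 h).elim hU.1 hW.1
  have hb1 : k ≤ inDeg hd tl S (U ∩ W) := feas_lb hS hne hrI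
  have hb2 : k ≤ inDeg hd tl S (U ∪ W) :=
    feas_lb hS (hne.mono Finset.inter_subset_union) hrU
  have hst := submod_strict hd tl S U W ha h1 h2 h3 h4
  have h4' := hU.2
  have h5' := hW.2
  omega

private theorem aux_main [Fintype V] (hd tl : A → V) (k q : ℕ) (r : V)
    (S T : Finset A) (hS : Feasible hd tl k r S)
    (XX : ℕ → Finset V) (Ee Ff : ℕ → A)
    (hq2 : 2 ≤ q)
    (hES : ∀ i, Ee i ∈ S \ T)
    (hheads : ∀ i, hd (Ee i) = hd (Ff i))
    (htightX : ∀ i, Tight hd tl S k r (XX i))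
    (harcF : ∀ i, ArcIn hd tl (XX i) (Ff i))
    (hcyc' : ∀ i, ArcIn hd tl (XX i) (Ee (i + 1)))
    (hEq : Ee q = Ee 0)
    (hchord : ∀ b, 1 ≤ b → b ≤ q - 1 → ¬ ArcIn hd tl (XX b) (Ee 1)) :
    ∃ g ∈ S, hd g = hd (Ff 0) ∧
      ((g ∈ S \ T ∧ ArcIn hd tl (XX 0) g) ∨
       (g ∈ S ∩ T ∧ ArcIn hd tl (XX 0 ∩ (Finset.Icc 1 (q - 1)).biUnion XX) g)) := by
  classical
  set CH : ℕ → Finset V := fun j => (Finset.Icc 1 j).biUnion XX with hCHdef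
  -- basic memberships
  have hh0 : hd (Ee 1) ∈ XX 0 := (hcyc' 0).1
  have ht0 : tl (Ee 1) ∈ XX 0 := (hcyc' 0).2
  have hh1 : hd (Ee 1) ∈ XX 1 := by rw [hheads 1]; exact (harcF 1).1
  have hv0 : hd (Ff 0) ∈ XX 0 := (harcF 0).1
  have hvq : hd (Ff 0) ∈ XX (q - 1) := by
    have h := (hcyc' (q - 1)).1
    rw [show q - 1 + 1 = q by omega, hEq] at h
    rwa [← hheads 0]
  -- chain tightness
  have chainT : ∀ j, 1 ≤ j → j ≤ q - 1 → Tight hd tl S k r (CH j) := by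
    intro j
    induction j with
    | zero => intro h; omega
    | succ n ih =>
      intro _ hle
      by_cases hn : n = 0
      · subst hn
        have : CH 1 = XX 1 := by
          simp [hCHdef]
        rw [this]
        exact htightX 1
      · have hn1 : 1 ≤ n := by omega
        have hT1 := ih hn1 (by omega)
        have hT2 := htightX (n + 1)
        have hsplit : CH (n + 1) = CH n ∪ XX (n + 1) := by
          ext x
          simp only [hCHdef, Finset.mem_biUnion, Finset.mem_Icc, Finset.mem_union]
          constructor
          · rintro ⟨i, ⟨hi1, hi2⟩, hx⟩
            rcases Nat.lt_or_ge i (n + 1) with h | h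
            · exact Or.inl ⟨i, ⟨hi1, by omega⟩, hx⟩
            · have hieq : i = n + 1 := by omega
              exact Or.inr (hieq ▸ hx)
          · rintro (⟨i, ⟨hi1, hi2⟩, hx⟩ | hx)
            · exact ⟨i, ⟨hi1, by omega⟩, hx⟩
            · exact ⟨n + 1, ⟨by omega, le_rfl⟩, hx⟩
        have hne : (CH n ∩ XX (n + 1)).Nonempty := by
          refine ⟨hd (Ff (n + 1)), Finset.mem_inter.2 ⟨?_, (harcF (n + 1)).1⟩⟩
          have hx : hd (Ff (n + 1)) ∈ XX n := by
            rw [← hheads (n + 1)]; exact (hcyc' n).1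
          exact Finset.mem_biUnion.2 ⟨n, Finset.mem_Icc.2 ⟨hn1, le_rfl⟩, hx⟩
        rw [hsplit]
        exact (tight_iu hS hT1 hT2 hne).2
  -- the key fact: tail of (Ee 1) avoids the chain
  have hfact : ∀ b, 1 ≤ b → b ≤ q - 1 → tl (Ee 1) ∉ XX b := by
    intro b0 hb01 hb02 hmem0
    have hex : ∃ b, 1 ≤ b ∧ b ≤ q - 1 ∧ tl (Ee 1) ∈ XX b :=
      ⟨b0, hb01, hb02, hmem0⟩
    obtain ⟨hb1, hb2, hbm⟩ := Nat.find_spec hex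
    set b := Nat.find hex with hbdef
    have hmin : ∀ m, m < b → ¬(1 ≤ m ∧ m ≤ q - 1 ∧ tl (Ee 1) ∈ XX m) :=
      fun m hm => Nat.find_min hex hm
    have hh_notb : hd (Ee 1) ∉ XX b := fun h => hchord b hb1 hb2 ⟨h, hbm⟩
    have hb2' : 2 ≤ b := by
      by_contra h
      have : b = 1 := by omega
      rw [this] at hh_notb
      exact hh_notb hh1
    have hU : Tight hd tl S k r (CH (b - 1)) := chainT (b - 1) (by omega) (by omega)
    have hW : Tight hd tl S k r (XX b) := htightX b
    have hneUW : (CH (b - 1) ∩ XX b).Nonempty := by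
      refine ⟨hd (Ff b), Finset.mem_inter.2 ⟨?_, (harcF b).1⟩⟩
      have hx : hd (Ff b) ∈ XX (b - 1) := by
        rw [← hheads b]
        have h := (hcyc' (b - 1)).1
        rwa [show b - 1 + 1 = b by omega] at h
      exact Finset.mem_biUnion.2 ⟨b - 1, Finset.mem_Icc.2 ⟨by omega, le_rfl⟩, hx⟩
    have hES1 : Ee 1 ∈ S := (Finset.mem_sdiff.1 (hES 1)).1
    have hhU : hd (Ee 1) ∈ CH (b - 1) :=
      Finset.mem_biUnion.2 ⟨1, Finset.mem_Icc.2 ⟨le_rfl, by omega⟩, hh1⟩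
    have htnotU : tl (Ee 1) ∉ CH (b - 1) := by
      intro h
      obtain ⟨m, hm, hmx⟩ := Finset.mem_biUnion.1 h
      obtain ⟨hm1, hm2⟩ := Finset.mem_Icc.1 hm
      exact hmin m (by omega) ⟨hm1, by omega, hmx⟩
    exact no_cross hS hU hW hneUW hES1 hhU hh_notb hbm htnotU
  -- Y and W
  have hYsT : Tight hd tl S k r (CH (q - 1)) := chainT (q - 1) (by omega) le_rfl
  have hvY : hd (Ff 0) ∈ CH (q - 1) :=
    Finset.mem_biUnion.2 ⟨q - 1, Finset.mem_Icc.2 ⟨by omega, le_rfl⟩, hvq⟩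
  have hWt : Tight hd tl S k r (XX 0 ∩ CH (q - 1)) :=
    (tight_iu hS (htightX 0) hYsT ⟨hd (Ff 0), Finset.mem_inter.2 ⟨hv0, hvY⟩⟩).1
  have hvr : hd (Ff 0) ≠ r := fun h => (htightX 0).1 (h ▸ hv0)
  by_cases hcase : ∃ a ∈ S, hd a = hd (Ff 0) ∧
      ((a ∉ T ∧ tl a ∈ XX 0) ∨ (a ∈ T ∧ tl a ∈ XX 0 ∩ CH (q - 1)))
  · obtain ⟨a, haS, hav, hor⟩ := hcase
    refine ⟨a, haS, hav, ?_⟩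
    rcases hor with ⟨hnT, htl⟩ | ⟨hT', htl⟩
    · exact Or.inl ⟨Finset.mem_sdiff.2 ⟨haS, hnT⟩, ⟨by rw [hav]; exact hv0, htl⟩⟩
    · exact Or.inr ⟨Finset.mem_inter.2 ⟨haS, hT'⟩,
        ⟨by rw [hav]; exact Finset.mem_inter.2 ⟨hv0, hvY⟩, htl⟩⟩
  · have hkey : ∀ a ∈ S, hd a = hd (Ff 0) → tl a ∉ XX 0 ∩ CH (q - 1) := by
      intro a ha hav htl
      by_cases haT : a ∈ T
      · exact hcase ⟨a, ha, hav, Or.inr ⟨haT, htl⟩⟩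
      · exact hcase ⟨a, ha, hav, Or.inl ⟨haT, (Finset.mem_inter.1 htl).1⟩⟩
    have hdegv : inDeg hd tl S {hd (Ff 0)} = k := feas_deg hS hvr
    have hAvcard : (S.filter (fun a => hd a ∈ ({hd (Ff 0)} : Finset V) ∧
        tl a ∉ ({hd (Ff 0)} : Finset V))).card = k := hdegv
    have hEWcard : (S.filter (fun a => hd a ∈ XX 0 ∩ CH (q - 1) ∧
        tl a ∉ XX 0 ∩ CH (q - 1))).card = k := hWt.2
    have hsub : S.filter (fun a => hd a ∈ ({hd (Ff 0)} : Finset V) ∧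
        tl a ∉ ({hd (Ff 0)} : Finset V)) ⊆
        S.filter (fun a => hd a ∈ XX 0 ∩ CH (q - 1) ∧ tl a ∉ XX 0 ∩ CH (q - 1)) := by
      intro a ha
      obtain ⟨haS, h1', _⟩ := Finset.mem_filter.1 ha
      have hav := Finset.mem_singleton.1 h1'
      refine Finset.mem_filter.2 ⟨haS, ?_, hkey a haS hav⟩
      rw [hav]
      exact Finset.mem_inter.2 ⟨hv0, hvY⟩
    have heqset := Finset.eq_of_subset_of_card_le hsub (by omega)
    have hE1W : Ee 1 ∈ S.filter (fun a => hd a ∈ XX 0 ∩ CH (q - 1) ∧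
        tl a ∉ XX 0 ∩ CH (q - 1)) := by
      refine Finset.mem_filter.2 ⟨(Finset.mem_sdiff.1 (hES 1)).1,
        Finset.mem_inter.2 ⟨hh0, Finset.mem_biUnion.2
          ⟨1, Finset.mem_Icc.2 ⟨le_rfl, by omega⟩, hh1⟩⟩, ?_⟩
      intro htlW
      obtain ⟨-, htlY⟩ := Finset.mem_inter.1 htlW
      obtain ⟨m, hm, hmx⟩ := Finset.mem_biUnion.1 htlY
      obtain ⟨hm1, hm2⟩ := Finset.mem_Icc.1 hm
      exact hfact m hm1 hm2 hmx
    rw [← heqset] at hE1W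
    have hEv : hd (Ee 1) = hd (Ff 0) :=
      Finset.mem_singleton.1 (Finset.mem_filter.1 hE1W).2.1
    exact ⟨Ee 1, (Finset.mem_sdiff.1 (hES 1)).1, hEv,
      Or.inl ⟨hES 1, ⟨hh0, ht0⟩⟩⟩

end Aux

theorem stmt_8 [Fintype V] [DecidableEq V] [DecidableEq A] (hd tl : A → V)
    (k p : ℕ) (r : V)
    (S T : Finset A) (hS : Feasible hd tl k r S) (hT : Feasible hd tl k r T)
    (e f : Fin p → A)
    (he_inj : Function.Injective e) (hf_inj : Function.Injective f)
    (he_range : S \ T = Finset.image e Finset.univ)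
    (hf_range : T \ S = Finset.image f Finset.univ)
    (h_heads : ∀ i : Fin p, hd (e i) = hd (f i))
    (X : Fin p → Finset V) (hX : ∀ i : Fin p, MinTightFor hd tl S k r (f i) (X i))
    (q : ℕ) (hq2 : 2 ≤ q) (hqp : q ≤ p)
    (hcyc : ∀ i : Fin q, ArcIn hd tl (X (Fin.castLE hqp i))
      (e (Fin.castLE hqp ⟨(i.val + 1) % q, Nat.mod_lt _ i.pos⟩)))
    (hshort : ∀ m : ℕ, 0 < m → m < q → ¬ AuxCycle hd tl X e m)
    :
    ∃ f₁' ∈ S, hd f₁' = hd (f (Fin.castLE hqp ⟨0, by omega⟩)) ∧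
      ((f₁' ∈ S \ T ∧ ArcIn hd tl (X (Fin.castLE hqp ⟨0, by omega⟩)) f₁') ∨
       (f₁' ∈ S ∩ T ∧ ArcIn hd tl
          (X (Fin.castLE hqp ⟨0, by omega⟩) ∩
            ((Finset.univ.filter (fun i : Fin q => i ≠ ⟨0, by omega⟩)).biUnion
              (fun i => X (Fin.castLE hqp i)))) f₁')) := by
  classical
  have hq0 : 0 < q := by omega
  set J : ℕ → Fin p := fun i => Fin.castLE hqp ⟨i % q, Nat.mod_lt _ hq0⟩ with hJdef
  have hJlt : ∀ (i : ℕ) (h : i < q), J i = Fin.castLE hqp ⟨i, h⟩ := by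
    intro i h
    apply Fin.ext
    simp [hJdef, Nat.mod_eq_of_lt h]
  -- no X (J i) is univ, and basic properties
  have hgood : ∀ i : ℕ, Tight hd tl S k r (X (J i)) ∧ ArcIn hd tl (X (J i)) (f (J i)) := by
    intro i
    rcases hX (J i) with ⟨h1, h2, _⟩ | ⟨_, huniv⟩
    · exact ⟨h1, h2⟩
    · exfalso
      apply hshort 1 one_pos (by omega)
      refine ⟨fun _ => J i, fun a b _ => Subsingleton.elim a b, ?_⟩
      intro j
      rw [huniv]
      exact ⟨Finset.mem_univ _, Finset.mem_univ _⟩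
  -- the cycle, over ℕ indices
  have hcyc' : ∀ i : ℕ, ArcIn hd tl (X (J i)) (e (J (i + 1))) := by
    intro i
    have h := hcyc ⟨i % q, Nat.mod_lt _ hq0⟩
    have heq : (Fin.castLE hqp ⟨(i % q + 1) % q, Nat.mod_lt _ hq0⟩ : Fin p) = J (i + 1) := by
      apply Fin.ext
      simp [hJdef, Nat.mod_add_mod]
    rw [heq] at h
    exact h
  have hEq' : e (J q) = e (J 0) := by
    congr 1
    apply Fin.ext
    simp [hJdef, Nat.mod_self]
  -- chord exclusion from shortest cycle
  have hchord : ∀ b, 1 ≤ b → b ≤ q - 1 → ¬ ArcIn hd tl (X (J b)) (e (J 1)) := by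
    intro b hb1 hb2 harc
    apply hshort b (by omega) (by omega)
    refine ⟨fun i => J (i.1 + 1), ?_, ?_⟩
    · intro x y hxy
      have hx : x.1 + 1 < q := by omega
      have hy : y.1 + 1 < q := by omega
      have := congrArg Fin.val hxy
      simp only [hJdef, Fin.coe_castLE] at this
      rw [Nat.mod_eq_of_lt hx, Nat.mod_eq_of_lt hy] at this
      exact Fin.ext (by omega)
    · intro i
      show ArcIn hd tl (X (J (i.1 + 1))) (e (J ((i.1 + 1) % b + 1)))
      by_cases hlt : i.1 + 1 < b
      · have hmod : (i.1 + 1) % b = i.1 + 1 := Nat.mod_eq_of_lt hlt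
        rw [hmod]
        exact hcyc' (i.1 + 1)
      · have hieq : i.1 + 1 = b := by
          have := i.2
          omega
        have hmod : (i.1 + 1) % b = 0 := by
          rw [hieq]; exact Nat.mod_self b
        rw [hmod, hieq]
        exact harc
  -- apply the auxiliary theorem
  obtain ⟨g, hgS, hghd, hgor⟩ :=
    aux_main hd tl k q r S T hS (fun i => X (J i)) (fun i => e (J i)) (fun i => f (J i))
      hq2
      (fun i => by rw [he_range]; exact Finset.mem_image_of_mem e (Finset.mem_univ _))
      (fun i => h_heads (J i))
      (fun i => (hgood i).1)
      (fun i => (hgood i).2)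
      hcyc' hEq' hchord
  -- translate sets back
  have hJ0 : J 0 = Fin.castLE hqp ⟨0, by omega⟩ := hJlt 0 (by omega)
  have hYs : (Finset.Icc 1 (q - 1)).biUnion (fun i => X (J i)) =
      (Finset.univ.filter (fun i : Fin q => i ≠ ⟨0, by omega⟩)).biUnion
        (fun i => X (Fin.castLE hqp i)) := by
    ext x
    simp only [Finset.mem_biUnion, Finset.mem_Icc, Finset.mem_filter,
      Finset.mem_univ, true_and]
    constructor
    · rintro ⟨n, ⟨hn1, hn2⟩, hx⟩
      have hnq : n < q := by omega
      refine ⟨⟨n, hnq⟩, ?_, ?_⟩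
      · intro h
        have := congrArg Fin.val h
        simp only at this
        omega
      · rwa [hJlt n hnq] at hx
    · rintro ⟨i, hi0, hx⟩
      have hiv : 1 ≤ i.val := by
        rcases Nat.eq_zero_or_pos i.val with h | h
        · exact absurd (Fin.ext h) hi0
        · exact h
      refine ⟨i.val, ⟨hiv, by omega⟩, ?_⟩
      have : J i.val = Fin.castLE hqp i := by
        apply Fin.ext
        simp [hJdef, Nat.mod_eq_of_lt i.isLt]
      rwa [this]
  rw [hJ0] at hghd hgor
  rw [hYs] at hgor
  exact ⟨g, hgS, hghd, hgor⟩
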